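/- Let G be a finite simple bipartite graph, W : i_1, i_2, …, i_{2k}, i_1 an even closed walk in G with edges e_{j_t} = {i_t, i_{t+1}} for t = 1,…,2k (indices mod 2k), and let e_j be an edge of G such that e_j ≠ {i_a, i_b} for all 1 ≤ a < b ≤ 2k. Then the vector v(W) = Σ_{t=1}^{k} ε_{j_{2t−1}} − Σ_{t=1}^{k} ε_{j_{2t}} ∈ ℤ^n lies in KL_{−h_j}, the K-linear span of the cycle vectors v(C) over all cycles C of G with −h_j + h(v(C)) ∉ H(G). -/

import Mathlib

open Finset

/-- The vector `h_e = δ_i + δ_j ∈ ℤ^m` associated with an edge `e = {i,j}`. -/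
noncomputable def edgeVec {m : ℕ} (s : Sym2 (Fin m)) : Fin m → ℤ :=
  Sym2.lift ⟨fun i j => Pi.single i 1 + Pi.single j 1, fun _ _ => add_comm _ _⟩ s

/-- The cycle vector `v(C) ∈ ℤ^n` of a closed walk `C`, with respect to an enumeration
`e : Fin n → Sym2 (Fin m)` of the edges of the graph: the alternating sum
`∑_t (-1)^t ε_{k_t}` where `e_{k_t}` is the `t`-th edge of `C`. -/
def cycVec {m n : ℕ} (e : Fin n → Sym2 (Fin m)) {G : SimpleGraph (Fin m)} {x : Fin m}
    (C : G.Walk x x) : Fin n → ℤ :=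
  fun j => ∑ t ∈ Finset.range C.edges.length,
    if C.edges[t]? = some (e j) then (-1 : ℤ) ^ t else 0

/-- `h(v(C)) = ∑_{j ∈ V(C)} δ_j ∈ ℤ^m` for a closed walk `C`. -/
noncomputable def suppVec {m : ℕ} {G : SimpleGraph (Fin m)} {x : Fin m}
    (C : G.Walk x x) : Fin m → ℤ :=
  ∑ u ∈ C.support.toFinset, Pi.single u 1

/-- A cycle is induced (chordless) if every edge of `G` joining two of its vertices is one
of its edges. -/
def Chordless {m : ℕ} (G : SimpleGraph (Fin m)) {x : Fin m} (C : G.Walk x x) : Prop :=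
  ∀ u w : Fin m, G.Adj u w → u ∈ C.support → w ∈ C.support → s(u, w) ∈ C.edges



/-- alternating edge-indicator vector of an arbitrary walk -/
def avec {m n : ℕ} (e : Fin n → Sym2 (Fin m)) {G : SimpleGraph (Fin m)} {x y : Fin m}
    (p : G.Walk x y) : Fin n → ℤ :=
  fun j => ∑ t ∈ Finset.range p.edges.length,
    if p.edges[t]? = some (e j) then (-1 : ℤ) ^ t else 0

lemma avec_eq_zero {m n : ℕ} (e : Fin n → Sym2 (Fin m)) {G : SimpleGraph (Fin m)}
    {x y : Fin m} (p : G.Walk x y) (h : p.length = 0) : avec e p = 0 := by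
  funext t
  simp [avec, SimpleGraph.Walk.length_edges, h]

lemma avec_append {m n : ℕ} (e : Fin n → Sym2 (Fin m)) {G : SimpleGraph (Fin m)}
    {x y z : Fin m} (p : G.Walk x y) (q : G.Walk y z) :
    avec e (p.append q) = avec e p + (-1 : ℤ) ^ p.length • avec e q := by
  funext t
  simp only [avec, SimpleGraph.Walk.edges_append, List.length_append,
    SimpleGraph.Walk.length_edges, Pi.add_apply, Pi.smul_apply, smul_eq_mul]
  rw [← Finset.sum_range_add_sum_Ico _ (Nat.le_add_right p.length q.length)]
  congr 1
  · apply Finset.sum_congr rfl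
    intro i hi
    rw [Finset.mem_range] at hi
    rw [List.getElem?_append_left (by rw [SimpleGraph.Walk.length_edges]; exact hi)]
  · rw [Finset.sum_Ico_eq_sum_range, Nat.add_sub_cancel_left, Finset.mul_sum]
    apply Finset.sum_congr rfl
    intro i hi
    rw [List.getElem?_append_right (by rw [SimpleGraph.Walk.length_edges]; omega)]
    rw [SimpleGraph.Walk.length_edges, Nat.add_sub_cancel_left, pow_add]
    split <;> ring

lemma walk_parity {m : ℕ} {G : SimpleGraph (Fin m)} (f : Fin m → Bool)
    (hf : ∀ u v, G.Adj u v → f u ≠ f v) {u v : Fin m} (p : G.Walk u v) :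
    Even p.length ↔ f u = f v := by
  induction p with
  | nil => simp
  | cons h p ih =>
    have hne := hf _ _ h
    rw [SimpleGraph.Walk.length_cons, Nat.even_add_one, ih]
    revert hne
    cases (f _) <;> cases (f _) <;> cases (f _) <;> simp

lemma avec_length_two {m n : ℕ} (e : Fin n → Sym2 (Fin m)) {G : SimpleGraph (Fin m)}
    {x : Fin m} (W : G.Walk x x) (h2 : W.length = 2) : avec e W = 0 := by
  cases W with
  | nil => simp at h2
  | cons h p =>
    cases p with
    | nil => simp at h2
    | cons h' q =>
      cases q with
      | cons h'' r => simp [SimpleGraph.Walk.length_cons] at h2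
      | nil =>
        funext t
        simp only [avec, SimpleGraph.Walk.edges_cons, SimpleGraph.Walk.edges_nil]
        rw [show ([s(x, _), s(_, x)] : List (Sym2 (Fin m))).length = 2 by rfl]
        rw [Finset.sum_range_succ, Finset.sum_range_succ, Finset.sum_range_zero]
        simp only [List.getElem?_cons_zero, List.getElem?_cons_succ, pow_zero, pow_one,
          Option.some.injEq, Pi.zero_apply]
        rw [Sym2.eq_swap (a := x)]
        split <;> simp
lemma isCycle_of_tail_nodup {m : ℕ} {G : SimpleGraph (Fin m)} {x : Fin m}
    (C : G.Walk x x) (hnd : C.support.tail.Nodup) (h0 : C.length ≠ 0)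
    (h2 : C.length ≠ 2) : C.IsCycle := by
  cases C with
  | nil => simp at h0
  | @cons _ y _ hadj P =>
    have hPn : P.support.Nodup := by simpa [SimpleGraph.Walk.support_cons] using hnd
    have hP : P.IsPath := (SimpleGraph.Walk.isPath_def P).mpr hPn
    rw [SimpleGraph.Walk.cons_isCycle_iff]
    refine ⟨hP, fun hmem => ?_⟩
    cases P with
    | nil => simp at hmem
    | @cons _ z _ hadj2 Q =>
      rw [SimpleGraph.Walk.edges_cons, List.mem_cons] at hmem
      rcases hmem with heq | hmem
      · rw [Sym2.eq_iff] at heq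
        rcases heq with ⟨hxy, -⟩ | ⟨hxz, -⟩
        · exact hadj.ne hxy
        · subst hxz
          cases Q with
          | nil => exact h2 (by simp)
          | cons hadj3 R =>
            rw [SimpleGraph.Walk.support_cons, SimpleGraph.Walk.support_cons,
              List.nodup_cons, List.nodup_cons] at hPn
            exact hPn.2.1 R.end_mem_support
      · have hy : y ∈ Q.support := SimpleGraph.Walk.snd_mem_support_of_mem_edges Q hmem
        rw [SimpleGraph.Walk.support_cons, List.nodup_cons] at hPn
        exact hPn.1 hy
lemma sym2_exists_rep {α : Type*} (s : Sym2 α) : ∃ a b, s = s(a, b) := by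
  induction s using Sym2.ind with
  | _ a b => exact ⟨a, b, rfl⟩

lemma cycVec_eq_avec {m n : ℕ} (e : Fin n → Sym2 (Fin m)) {G : SimpleGraph (Fin m)}
    {x : Fin m} (C : G.Walk x x) : cycVec e C = avec e C := rfl

lemma cast_avec_append (K : Type*) [Field K] {m n : ℕ} (e : Fin n → Sym2 (Fin m))
    {G : SimpleGraph (Fin m)} {x y z : Fin m} (p : G.Walk x y) (q : G.Walk y z) :
    (fun t => ((avec e (p.append q) t : ℤ) : K)) =
      (fun t => ((avec e p t : ℤ) : K)) +
        ((-1 : K) ^ p.length) • (fun t => ((avec e q t : ℤ) : K)) := by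
  funext t
  rw [avec_append]
  simp only [Pi.add_apply, Pi.smul_apply, smul_eq_mul]
  push_cast
  ring

/-- Let `G` be a finite simple bipartite graph with edges enumerated by
`e : Fin n → Sym2 (Fin m)`, let `W` be an even closed walk in `G` and `e j` an edge of `G`
which does not join two vertices of `W`.  Then the vector `v(W)` (the alternating sum of the
standard basis vectors indexed by the edges of `W`) lies in `KL_{-h_j}`, the `K`-span of the
cycle vectors `v(C)` over all cycles `C` of `G` with `-h_j + h(v(C)) ∉ H(G)`. -/
theorem stmt_9 (K : Type*) [Field K] (m n : ℕ) (G : SimpleGraph (Fin m))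
    (hbip : ∃ f : Fin m → Bool, ∀ u v, G.Adj u v → f u ≠ f v)
    (e : Fin n → Sym2 (Fin m)) (heinj : Function.Injective e)
    (herange : ∀ s, s ∈ G.edgeSet ↔ s ∈ Set.range e)
    (H : AddSubmonoid (Fin m → ℤ))
    (hH : H = AddSubmonoid.closure (Set.range fun j => edgeVec (e j)))
    (x : Fin m) (W : G.Walk x x) (hWeven : Even W.length)
    (j : Fin n)
    (hj : ∀ u w : Fin m, u ∈ W.support → w ∈ W.support → e j ≠ s(u, w)) :
    (fun t => ((cycVec e W t : ℤ) : K)) ∈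
      Submodule.span K {y : Fin n → K | ∃ (p : Fin m) (C : G.Walk p p), C.IsCycle ∧
        -(edgeVec (e j)) + suppVec C ∉ H ∧ y = fun t => ((cycVec e C t : ℤ) : K)} := by
  classical
  obtain ⟨f, hf⟩ := hbip
  -- every element of H is coordinatewise nonnegative
  have hHpos : ∀ v ∈ H, ∀ i, (0 : ℤ) ≤ v i := by
    intro v hv
    rw [hH] at hv
    refine AddSubmonoid.closure_induction ?_ ?_ ?_ hv
    · rintro w ⟨k, rfl⟩ i
      obtain ⟨a, b, hab⟩ := sym2_exists_rep (e k)
      simp only [hab, edgeVec, Sym2.lift_mk, Pi.add_apply, Pi.single_apply]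
      split_ifs <;> norm_num
    · intro i; simp
    · intro a b _ _ ha hb i
      simpa using add_nonneg (ha i) (hb i)
  -- any cycle inside the support of W satisfies the H-condition
  have hnotH : ∀ (p : Fin m) (C : G.Walk p p), (∀ v ∈ C.support, v ∈ W.support) →
      -(edgeVec (e j)) + suppVec C ∉ H := by
    intro p C hsub hmem
    obtain ⟨a, b, hab⟩ := sym2_exists_rep (e j)
    have hval : ∀ a : Fin m, edgeVec (e j) a ≥ 1 → a ∉ C.support → False := by
      intro a h1 ha
      have h2 : suppVec C a = 0 := by
        simp only [suppVec, Finset.sum_apply]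
        apply Finset.sum_eq_zero
        intro u hu
        have hne : a ≠ u := by
          rintro rfl
          exact ha (List.mem_toFinset.mp hu)
        simp [Pi.single_apply, hne]
      have := hHpos _ hmem a
      simp only [Pi.add_apply, Pi.neg_apply, h2] at this
      omega
    have hor : a ∉ C.support ∨ b ∉ C.support := by
      by_contra hcon
      push_neg at hcon
      exact hj a b (hsub a hcon.1) (hsub b hcon.2) hab
    have hea : edgeVec (e j) a ≥ 1 := by
      rw [hab]
      simp only [edgeVec, Sym2.lift_mk, Pi.add_apply, Pi.single_apply]
      split_ifs <;> norm_num
    have heb : edgeVec (e j) b ≥ 1 := by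
      rw [hab, Sym2.eq_swap]
      simp only [edgeVec, Sym2.lift_mk, Pi.add_apply, Pi.single_apply]
      split_ifs <;> norm_num
    rcases hor with ha | hb
    · exact hval a hea ha
    · exact hval b heb hb
  -- main induction
  have key : ∀ (N : ℕ) (p : Fin m) (C : G.Walk p p), C.length ≤ N →
      (∀ v ∈ C.support, v ∈ W.support) →
      (fun t => ((cycVec e C t : ℤ) : K)) ∈ Submodule.span K
        {y : Fin n → K | ∃ (p : Fin m) (C : G.Walk p p), C.IsCycle ∧
          -(edgeVec (e j)) + suppVec C ∉ H ∧ y = fun t => ((cycVec e C t : ℤ) : K)} := by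
    intro N
    induction N with
    | zero =>
      intro p C hlen _
      have h0 : cycVec e C = 0 := avec_eq_zero e C (Nat.le_zero.mp hlen)
      simp only [h0, Pi.zero_apply, Int.cast_zero]
      exact Submodule.zero_mem _
    | succ N ih =>
      intro p C hlen hsub
      by_cases h0 : C.length = 0
      · have h0' : cycVec e C = 0 := avec_eq_zero e C h0
        simp only [h0', Pi.zero_apply, Int.cast_zero]
        exact Submodule.zero_mem _
      by_cases hnd : C.support.tail.Nodup
      · by_cases h2 : C.length = 2
        · have h2' : cycVec e C = 0 := avec_length_two e C h2
          simp only [h2', Pi.zero_apply, Int.cast_zero]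
          exact Submodule.zero_mem _
        · exact Submodule.subset_span
            ⟨p, C, isCycle_of_tail_nodup C hnd h0 h2, hnotH p C hsub, rfl⟩
      · -- there is a repeated vertex in the tail of the support: split the walk
        obtain ⟨y, hy⟩ := List.exists_duplicate_iff_not_nodup.mpr hnd
        have hyc : 2 ≤ C.support.tail.count y := List.duplicate_iff_two_le_count.mp hy
        have hymem : y ∈ C.support := List.mem_of_mem_tail hy.mem
        have hcountC : 2 ≤ C.support.count y :=
          le_trans hyc (List.Sublist.count_le y (List.tail_sublist _))
        have hspec := C.take_spec hymem
        have hcountA : (C.takeUntil y hymem).support.count y = 1 :=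
          C.count_support_takeUntil_eq_one hymem
        have hsupp : C.support =
            (C.takeUntil y hymem).support ++ (C.dropUntil y hymem).support.tail := by
          conv_lhs => rw [← hspec]
          rw [SimpleGraph.Walk.support_append]
        have hyB : y ∈ (C.dropUntil y hymem).support.tail := by
          have h' := hcountC
          rw [hsupp, List.count_append, hcountA] at h'
          have : 1 ≤ (C.dropUntil y hymem).support.tail.count y := by omega
          exact List.count_pos_iff.mp this
        cases hq : C.dropUntil y hymem with
        | nil =>
          rw [hq] at hyB
          simp at hyB
        | @cons _ z _ hadj B'' =>
          rw [hq] at hyB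
          rw [SimpleGraph.Walk.support_cons, List.tail_cons] at hyB
          -- hyB : y ∈ B''.support
          have hspec2 := B''.take_spec hyB
          have hCeq : C = (C.takeUntil y hymem).append
              ((SimpleGraph.Walk.cons hadj (B''.takeUntil y hyB)).append
                (B''.dropUntil y hyB)) := by
            rw [SimpleGraph.Walk.cons_append, hspec2, ← hq, hspec]
          -- length bookkeeping
          have hlen1 : C.length = (C.takeUntil y hymem).length +
              ((B''.takeUntil y hyB).length + 1 + (B''.dropUntil y hyB).length) := by
            have h' := congrArg SimpleGraph.Walk.length hCeq
            rw [SimpleGraph.Walk.length_append, SimpleGraph.Walk.length_append,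
              SimpleGraph.Walk.length_cons] at h'
            omega
          -- nontriviality of the outer part
          have hAR : 1 ≤ (C.takeUntil y hymem).length + (B''.dropUntil y hyB).length := by
            by_contra hcon
            push_neg at hcon
            have hA0 : (C.takeUntil y hymem).length = 0 := by omega
            have hR0 : (B''.dropUntil y hyB).length = 0 := by omega
            have hAt : (C.takeUntil y hymem).support.tail = [] := by
              have h1 : (C.takeUntil y hymem).support.tail.length = 0 := by
                rw [List.length_tail, SimpleGraph.Walk.length_support, hA0]
              exact List.eq_nil_of_length_eq_zero h1
            have hAs : (C.takeUntil y hymem).support = [p] := by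
              rw [(C.takeUntil y hymem).support_eq_cons, hAt]
            have hRs : (B''.dropUntil y hyB).support.tail = [] := by
              have h1 : (B''.dropUntil y hyB).support.tail.length = 0 := by
                rw [List.length_tail, SimpleGraph.Walk.length_support, hR0]
              exact List.eq_nil_of_length_eq_zero h1
            have hone : C.support.tail.count y = 1 := by
              rw [hsupp, hAs, hq]
              rw [SimpleGraph.Walk.support_cons, List.tail_cons]
              simp only [List.singleton_append, List.tail_cons]
              conv_lhs => rw [← hspec2]
              rw [SimpleGraph.Walk.support_append, List.count_append, hRs,
                B''.count_support_takeUntil_eq_one hyB]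
              simp
            omega
          -- evenness of the middle closed walk
          have hevM : Even (SimpleGraph.Walk.cons hadj (B''.takeUntil y hyB)).length :=
            (walk_parity f hf _).mpr rfl
          -- support inclusions
          have hsubA : ∀ v ∈ (C.takeUntil y hymem).support, v ∈ W.support :=
            fun v hv => hsub v (C.support_takeUntil_subset hymem hv)
          have hsubB'' : ∀ v ∈ B''.support, v ∈ W.support := by
            intro v hv
            apply hsub
            apply C.support_dropUntil_subset hymem
            rw [hq, SimpleGraph.Walk.support_cons]
            exact List.mem_cons_of_mem _ hv
          have hsubM : ∀ v ∈ (SimpleGraph.Walk.cons hadj (B''.takeUntil y hyB)).support,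
              v ∈ W.support := by
            intro v hv
            rw [SimpleGraph.Walk.support_cons] at hv
            rcases List.mem_cons.mp hv with rfl | hv
            · exact hsub _ hymem
            · exact hsubB'' v (B''.support_takeUntil_subset hyB hv)
          have hsubR : ∀ v ∈ (B''.dropUntil y hyB).support, v ∈ W.support :=
            fun v hv => hsubB'' v (B''.support_dropUntil_subset hyB hv)
          have hsubAR : ∀ v ∈ ((C.takeUntil y hymem).append
              (B''.dropUntil y hyB)).support, v ∈ W.support := by
            intro v hv
            rcases (SimpleGraph.Walk.mem_support_append_iff _ _).mp hv with hv | hv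
            · exact hsubA v hv
            · exact hsubR v hv
          -- the two recursive calls
          have ihM := ih y (SimpleGraph.Walk.cons hadj (B''.takeUntil y hyB))
            (by rw [SimpleGraph.Walk.length_cons]; omega) hsubM
          have ihAR := ih p ((C.takeUntil y hymem).append (B''.dropUntil y hyB))
            (by rw [SimpleGraph.Walk.length_append]; omega) hsubAR
          -- assemble
          rw [cycVec_eq_avec] at ihM ihAR ⊢
          rw [hCeq, cast_avec_append, cast_avec_append, hevM.neg_one_pow, one_smul]
          rw [cast_avec_append] at ihAR
          have hsum : (fun t => ((avec e (C.takeUntil y hymem) t : ℤ) : K)) +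
              ((-1 : K) ^ (C.takeUntil y hymem).length) •
                ((fun t => ((avec e (SimpleGraph.Walk.cons hadj (B''.takeUntil y hyB)) t : ℤ) : K)) +
                  (fun t => ((avec e (B''.dropUntil y hyB) t : ℤ) : K))) =
              ((fun t => ((avec e (C.takeUntil y hymem) t : ℤ) : K)) +
                ((-1 : K) ^ (C.takeUntil y hymem).length) •
                  (fun t => ((avec e (B''.dropUntil y hyB) t : ℤ) : K))) +
              ((-1 : K) ^ (C.takeUntil y hymem).length) •
                (fun t => ((avec e (SimpleGraph.Walk.cons hadj (B''.takeUntil y hyB)) t : ℤ) : K)) := by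
            rw [smul_add]
            abel
          rw [hsum]
          exact Submodule.add_mem _ ihAR (Submodule.smul_mem _ _ ihM)
  exact key W.length x W le_rfl (fun v hv => hv)
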